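/- arXiv:2507.00573 — 6 statements merged into one kernel-verified Lean document; each statement's English description precedes it below -/
import Mathlib

section
/- Let I ⊆ ℝ be an interval, g ∈ ℝ, and let h, u, b : I → ℝ be differentiable with (h u)′(x) = 0 for all x ∈ I. Then for every x ∈ I one has the pointwise identity (h u^2 + g h^2/2)′(x) + g h(x) b′(x) = h(x) · ((1/2) u^2 + g (h + b))′(x). -/
open Set

/-- Under constant discharge `(h u)' = 0`, the divergence of the momentum flux
plus the bathymetry source term equals `h` times the derivative of the total head:
`(h u² + g h²/2)'(x) + g h(x) b'(x) = h(x) ((1/2) u² + g (h + b))'(x)`. -/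
theorem swe_momentum_head_identity
    (I : Set ℝ) (hI : I.OrdConnected) (g : ℝ) (h u b : ℝ → ℝ)
    (hh : ∀ x ∈ I, DifferentiableAt ℝ h x)
    (hu : ∀ x ∈ I, DifferentiableAt ℝ u x)
    (hb : ∀ x ∈ I, DifferentiableAt ℝ b x)
    (hq : ∀ x ∈ I, deriv (fun y => h y * u y) x = 0) :
    ∀ x ∈ I,
      deriv (fun y => h y * u y ^ 2 + g * h y ^ 2 / 2) x + g * h x * deriv b x
        = h x * deriv (fun y => (1 / 2) * u y ^ 2 + g * (h y + b y)) x := by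
  intro x hx
  have hh' := (hh x hx).hasDerivAt
  have hu' := (hu x hx).hasDerivAt
  have hb' := (hb x hx).hasDerivAt
  have hq' : deriv h x * u x + h x * deriv u x = 0 := by
    rw [← deriv_mul (hh x hx) (hu x hx)]; exact hq x hx
  have A : HasDerivAt (fun y => h y * u y ^ 2 + g * h y ^ 2 / 2)
      (deriv h x * u x ^ 2 + h x * (2 * u x ^ 1 * deriv u x)
        + g * (2 * h x ^ 1 * deriv h x) / 2) x :=
    (hh'.mul (hu'.pow 2)).add (((hh'.pow 2).const_mul g).div_const 2)
  have B : HasDerivAt (fun y => (1 / 2) * u y ^ 2 + g * (h y + b y))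
      ((1 / 2) * (2 * u x ^ 1 * deriv u x) + g * (deriv h x + deriv b x)) x :=
    ((hu'.pow 2).const_mul (1 / 2)).add ((hh'.add hb').const_mul g)
  rw [A.deriv, B.deriv]
  linear_combination u x * hq'
end

section
/- Let g, h, u, α be real numbers with g*h + α^2 > 0. The 3×3 real matrix A = ![![0, 1, 0], ![−u^2 + g*h − α^2/3, 2*u, 2*α/3], ![−2*u*α, 2*α, u]] (the system matrix of the first-order shallow water moment equations) has characteristic polynomial (X − u) * ((X − u)^2 − (g*h + α^2)); in particular it has the three pairwise distinct real eigenvalues u, u + √(g h + α^2) and u − √(g h + α^2), so the SWME1 system is strictly hyperbolic. -/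
open Polynomial

/-- The system matrix of the first-order shallow water moment equations (SWME1)
has characteristic polynomial `(X - u) ((X - u)² - (g h + α²))`; in particular it
has the three pairwise distinct real eigenvalues `u`, `u + √(g h + α²)`,
`u - √(g h + α²)`, so the SWME1 system is strictly hyperbolic. -/
theorem swme1_system_matrix_charpoly (g h u α : ℝ) (hgh : 0 < g * h + α ^ 2) :
    (!![0, 1, 0;
        -u ^ 2 + g * h - α ^ 2 / 3, 2 * u, 2 * α / 3;
        -2 * u * α, 2 * α, u] : Matrix (Fin 3) (Fin 3) ℝ).charpoly
      = (X - C u) * ((X - C u) ^ 2 - C (g * h + α ^ 2)) ∧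
    (!![0, 1, 0;
        -u ^ 2 + g * h - α ^ 2 / 3, 2 * u, 2 * α / 3;
        -2 * u * α, 2 * α, u] : Matrix (Fin 3) (Fin 3) ℝ).charpoly.IsRoot u ∧
    (!![0, 1, 0;
        -u ^ 2 + g * h - α ^ 2 / 3, 2 * u, 2 * α / 3;
        -2 * u * α, 2 * α, u] : Matrix (Fin 3) (Fin 3) ℝ).charpoly.IsRoot
      (u + Real.sqrt (g * h + α ^ 2)) ∧
    (!![0, 1, 0;
        -u ^ 2 + g * h - α ^ 2 / 3, 2 * u, 2 * α / 3;
        -2 * u * α, 2 * α, u] : Matrix (Fin 3) (Fin 3) ℝ).charpoly.IsRoot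
      (u - Real.sqrt (g * h + α ^ 2)) ∧
    u ≠ u + Real.sqrt (g * h + α ^ 2) ∧
    u ≠ u - Real.sqrt (g * h + α ^ 2) ∧
    u + Real.sqrt (g * h + α ^ 2) ≠ u - Real.sqrt (g * h + α ^ 2) := by
  have hs : Real.sqrt (g * h + α ^ 2) ≠ 0 := by
    positivity
  have hsq : Real.sqrt (g * h + α ^ 2) ^ 2 = g * h + α ^ 2 :=
    Real.sq_sqrt hgh.le
  have hcp : (!![0, 1, 0;
        -u ^ 2 + g * h - α ^ 2 / 3, 2 * u, 2 * α / 3;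
        -2 * u * α, 2 * α, u] : Matrix (Fin 3) (Fin 3) ℝ).charpoly
      = (X - C u) * ((X - C u) ^ 2 - C (g * h + α ^ 2)) := by
    apply Polynomial.funext
    intro x
    rw [Matrix.charpoly, Matrix.det_fin_three]
    simp [Matrix.charmatrix_apply, Matrix.diagonal_apply]
    ring
  refine ⟨hcp, ?_, ?_, ?_, ?_, ?_, ?_⟩
  · rw [hcp]; simp [Polynomial.IsRoot]
  · rw [hcp]
    simp only [Polynomial.IsRoot, eval_mul, eval_sub, eval_pow, eval_X, eval_C]
    rw [show u + Real.sqrt (g * h + α ^ 2) - u = Real.sqrt (g * h + α ^ 2) by ring, hsq]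
    ring
  · rw [hcp]
    simp only [Polynomial.IsRoot, eval_mul, eval_sub, eval_pow, eval_X, eval_C]
    rw [show u - Real.sqrt (g * h + α ^ 2) - u = -Real.sqrt (g * h + α ^ 2) by ring,
      neg_pow, hsq]
    ring
  · intro hEq
    exact hs (by linarith)
  · intro hEq
    exact hs (by linarith)
  · intro hEq
    exact hs (by linarith)
end

section
/- Let I ⊆ ℝ be an interval and let h, u, α : I → ℝ be differentiable with h(x) > 0 for all x ∈ I and (h u)′(x) = 0 for all x ∈ I. Then for every x ∈ I one has (2 h u α)′(x) − u(x) · (h α)′(x) = u(x) · h(x)^2 · (α/h)′(x). Consequently, if in addition (2 h u α)′(x) = u(x) · (h α)′(x) on I, then at each x ∈ I either u(x) = 0 or (α/h)′(x) = 0. -/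
section DerivIdentities

variable {h u α : ℝ → ℝ} {x : ℝ}

theorem sq_mul_deriv_div (hα : DifferentiableAt ℝ α x) (hh : DifferentiableAt ℝ h x)
    (hx : h x ≠ 0) :
    h x ^ 2 * deriv (fun y => α y / h y) x = deriv α x * h x - α x * deriv h x := by
  rw [(hα.hasDerivAt.fun_div hh.hasDerivAt hx).deriv]
  field_simp

theorem deriv_two_mul_mul_mul_sub_mul_deriv_mul (hh : DifferentiableAt ℝ h x)
    (hu : DifferentiableAt ℝ u x) (hα : DifferentiableAt ℝ α x) :
    deriv (fun y => 2 * h y * u y * α y) x - u x * deriv (fun y => h y * α y) x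
      = u x * (deriv α x * h x - α x * deriv h x)
        + 2 * α x * deriv (fun y => h y * u y) x := by
  have dh := hh.hasDerivAt
  have du := hu.hasDerivAt
  have dα := hα.hasDerivAt
  rw [(((dh.const_mul 2).fun_mul du).fun_mul dα).deriv, (dh.fun_mul dα).deriv,
    (dh.fun_mul du).deriv]
  ring

end DerivIdentities

theorem swme1_moment_identity_general
    (I : Set ℝ) (h u α : ℝ → ℝ)
    (hh : ∀ x ∈ I, DifferentiableAt ℝ h x)
    (hu : ∀ x ∈ I, DifferentiableAt ℝ u x)
    (hα : ∀ x ∈ I, DifferentiableAt ℝ α x)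
    (hpos : ∀ x ∈ I, 0 < h x)
    (hq : ∀ x ∈ I, deriv (fun y => h y * u y) x = 0) :
    (∀ x ∈ I,
      deriv (fun y => 2 * h y * u y * α y) x - u x * deriv (fun y => h y * α y) x
        = u x * h x ^ 2 * deriv (fun y => α y / h y) x) ∧
    ((∀ x ∈ I, deriv (fun y => 2 * h y * u y * α y) x
        = u x * deriv (fun y => h y * α y) x) →
      ∀ x ∈ I, u x = 0 ∨ deriv (fun y => α y / h y) x = 0) := by
  have key : ∀ x ∈ I,
      deriv (fun y => 2 * h y * u y * α y) x - u x * deriv (fun y => h y * α y) x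
        = u x * h x ^ 2 * deriv (fun y => α y / h y) x := fun x hx => by
    rw [deriv_two_mul_mul_mul_sub_mul_deriv_mul (hh x hx) (hu x hx) (hα x hx), hq x hx,
      mul_assoc (u x), sq_mul_deriv_div (hα x hx) (hh x hx) (hpos x hx).ne']
    ring
  refine ⟨key, fun heq x hx => ?_⟩
  have hzero : u x * h x ^ 2 * deriv (fun y => α y / h y) x = 0 := by
    rw [← key x hx, heq x hx, sub_self]
  have hh2 : h x ^ 2 ≠ 0 := pow_ne_zero 2 (hpos x hx).ne'
  simpa [hh2] using hzero

/-- In the SWME1 steady moment equation: with `h > 0` and constant discharge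
`(h u)' = 0`, one has `(2 h u α)'(x) - u(x) (h α)'(x) = u(x) h(x)² (α/h)'(x)`;
consequently, if `(2 h u α)' = u (h α)'` on `I`, then at each point either
`u = 0` or `(α/h)' = 0`. -/
theorem swme1_moment_identity
    (I : Set ℝ) (hI : I.OrdConnected) (h u α : ℝ → ℝ)
    (hh : ∀ x ∈ I, DifferentiableAt ℝ h x)
    (hu : ∀ x ∈ I, DifferentiableAt ℝ u x)
    (hα : ∀ x ∈ I, DifferentiableAt ℝ α x)
    (hpos : ∀ x ∈ I, 0 < h x)
    (hq : ∀ x ∈ I, deriv (fun y => h y * u y) x = 0) :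
    (∀ x ∈ I,
      deriv (fun y => 2 * h y * u y * α y) x - u x * deriv (fun y => h y * α y) x
        = u x * h x ^ 2 * deriv (fun y => α y / h y) x) ∧
    ((∀ x ∈ I, deriv (fun y => 2 * h y * u y * α y) x
        = u x * deriv (fun y => h y * α y) x) →
      ∀ x ∈ I, u x = 0 ∨ deriv (fun y => α y / h y) x = 0) :=
  swme1_moment_identity_general I h u α hh hu hα hpos hq
end

section
/- Let I ⊆ ℝ be an open interval, g > 0, and let h, u, α, b : I → ℝ be differentiable with h(x) > 0 and u(x) ≠ 0 for all x ∈ I. Then the frictionless steady SWME1 equations hold on I — namely (h u)′ = 0, (h u^2 + g h^2/2 + (1/3) h α^2)′ + g h b′ = 0, and (2 h u α)′ = u (h α)′ — if and only if the three functions h u, (1/2) u^2 + g (h + b) + (1/2) α^2, and α/h are constant on I. -/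
/-!
Write `m`, `e`, `w` for the derivatives of the equilibrium variables `h u`,
`u²/2 + g (h + b) + α²/2` and `α / h`. By the product and quotient rules the residuals of the
steady equations are, pointwise, `m`, `h e + u m - (α/3) h² w` and `2 α m + u h² w`: a triangular
system in `(m, w, e)` with diagonal `1, u h², h`, hence invertible where `h ≠ 0` and `u ≠ 0`. On an
open interval, a differentiable function has vanishing derivative iff it is constant.
-/

theorem IsOpen.exists_const_iff_forall_deriv_eq_zero {𝕜 G : Type*} [RCLike 𝕜]
    [NormedAddCommGroup G] [NormedSpace 𝕜 G] {s : Set 𝕜} {f : 𝕜 → G} (hs : IsOpen s)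
    (hs' : IsPreconnected s) (hf : ∀ x ∈ s, DifferentiableAt 𝕜 f x) :
    (∃ a, ∀ x ∈ s, f x = a) ↔ ∀ x ∈ s, deriv f x = 0 := by
  refine ⟨fun ⟨a, ha⟩ x hx => ?_, fun hf' =>
    hs.exists_is_const_of_deriv_eq_zero hs' (fun x hx => (hf x hx).differentiableWithinAt) hf'⟩
  rw [(Filter.eventuallyEq_of_mem (hs.mem_nhds hx) ha).deriv_eq, deriv_const]

section SteadyEquations

variable {h u α b : ℝ → ℝ} {x : ℝ}

theorem deriv_momentum_flux_add_source (g : ℝ) (hh : DifferentiableAt ℝ h x)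
    (hu : DifferentiableAt ℝ u x) (hα : DifferentiableAt ℝ α x) (hb : DifferentiableAt ℝ b x)
    (h0 : h x ≠ 0) :
    deriv (fun y => h y * u y ^ 2 + g * h y ^ 2 / 2 + (1 / 3) * h y * α y ^ 2) x
        + g * h x * deriv b x
      = h x * deriv (fun y => (1 / 2) * u y ^ 2 + g * (h y + b y) + (1 / 2) * α y ^ 2) x
        + u x * deriv (fun y => h y * u y) x
        - α x / 3 * h x ^ 2 * deriv (fun y => α y / h y) x := by
  simp (disch := first | assumption | fun_prop (disch := assumption)) only
    [deriv_fun_add, deriv_fun_mul, deriv_fun_pow, deriv_fun_div, deriv_div_const, deriv_const]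
  field_simp
  ring

theorem deriv_moment_flux (hh : DifferentiableAt ℝ h x)
    (hu : DifferentiableAt ℝ u x) (hα : DifferentiableAt ℝ α x) (h0 : h x ≠ 0) :
    deriv (fun y => 2 * h y * u y * α y) x
      = u x * deriv (fun y => h y * α y) x + 2 * α x * deriv (fun y => h y * u y) x
        + u x * h x ^ 2 * deriv (fun y => α y / h y) x := by
  simp (disch := first | assumption | fun_prop (disch := assumption)) only
    [deriv_fun_mul, deriv_fun_div, deriv_const]
  field_simp
  ring

end SteadyEquations

theorem swme1_steady_system_iff {h u a m e w B : ℝ} (hh : h ≠ 0) (hu : u ≠ 0) :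
    (m = 0 ∧ h * e + u * m - a / 3 * h ^ 2 * w = 0 ∧ u * B + 2 * a * m + u * h ^ 2 * w = u * B)
      ↔ (m = 0 ∧ e = 0 ∧ w = 0) := by
  refine ⟨fun ⟨hm, he, hw⟩ => ?_, fun ⟨hm, he, hw⟩ => by simp [hm, he, hw]⟩
  have hw : w = 0 := by simpa [hm, hu, hh] using hw
  exact ⟨hm, by simpa [hm, hw, hh] using he, hw⟩

theorem swme1_steady_state_characterization_general
    (I : Set ℝ) (hIopen : IsOpen I) (hIconn : Convex ℝ I)
    (g : ℝ) (h u α b : ℝ → ℝ)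
    (hh : ∀ x ∈ I, DifferentiableAt ℝ h x)
    (hu : ∀ x ∈ I, DifferentiableAt ℝ u x)
    (hα : ∀ x ∈ I, DifferentiableAt ℝ α x)
    (hb : ∀ x ∈ I, DifferentiableAt ℝ b x)
    (hpos : ∀ x ∈ I, 0 < h x)
    (hune : ∀ x ∈ I, u x ≠ 0) :
    ((∀ x ∈ I, deriv (fun y => h y * u y) x = 0) ∧
     (∀ x ∈ I, deriv (fun y =>
         h y * u y ^ 2 + g * h y ^ 2 / 2 + (1 / 3) * h y * α y ^ 2) x
       + g * h x * deriv b x = 0) ∧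
     (∀ x ∈ I, deriv (fun y => 2 * h y * u y * α y) x
       = u x * deriv (fun y => h y * α y) x))
    ↔
    ((∃ c₁, ∀ x ∈ I, h x * u x = c₁) ∧
     (∃ c₂, ∀ x ∈ I,
        (1 / 2) * u x ^ 2 + g * (h x + b x) + (1 / 2) * α x ^ 2 = c₂) ∧
     (∃ c₃, ∀ x ∈ I, α x / h x = c₃)) := by
  have hconst {f : ℝ → ℝ} (hf : ∀ x ∈ I, DifferentiableAt ℝ f x) :=
    hIopen.exists_const_iff_forall_deriv_eq_zero hIconn.isPreconnected hf
  rw [hconst (f := fun y => h y * u y) fun x hx => (hh x hx).mul (hu x hx),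
    hconst (f := fun y => (1 / 2) * u y ^ 2 + g * (h y + b y) + (1 / 2) * α y ^ 2)
      fun x hx => ((((hu x hx).pow 2).const_mul _).add (((hh x hx).add (hb x hx)).const_mul g)).add
        (((hα x hx).pow 2).const_mul _),
    hconst (f := fun y => α y / h y) fun x hx => (hα x hx).div (hh x hx) (hpos x hx).ne',
    ← forall₂_and, ← forall₂_and, ← forall₂_and, ← forall₂_and]
  refine forall₂_congr fun x hx => ?_
  rw [deriv_momentum_flux_add_source g (hh x hx) (hu x hx) (hα x hx) (hb x hx) (hpos x hx).ne',
    deriv_moment_flux (hh x hx) (hu x hx) (hα x hx) (hpos x hx).ne']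
  exact swme1_steady_system_iff (hpos x hx).ne' (hune x hx)

/-- Characterization of the frictionless smooth steady states of the SWME1 model:
on an open interval with `h > 0` and `u ≠ 0`, the steady equations
`(h u)' = 0`, `(h u² + g h²/2 + (1/3) h α²)' + g h b' = 0`, `(2 h u α)' = u (h α)'`
hold if and only if `h u`, `(1/2) u² + g (h + b) + (1/2) α²` and `α/h` are constant. -/
theorem swme1_steady_state_characterization
    (I : Set ℝ) (hIopen : IsOpen I) (hIconn : Convex ℝ I)
    (g : ℝ) (hg : 0 < g) (h u α b : ℝ → ℝ)
    (hh : ∀ x ∈ I, DifferentiableAt ℝ h x)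
    (hu : ∀ x ∈ I, DifferentiableAt ℝ u x)
    (hα : ∀ x ∈ I, DifferentiableAt ℝ α x)
    (hb : ∀ x ∈ I, DifferentiableAt ℝ b x)
    (hpos : ∀ x ∈ I, 0 < h x)
    (hune : ∀ x ∈ I, u x ≠ 0) :
    ((∀ x ∈ I, deriv (fun y => h y * u y) x = 0) ∧
     (∀ x ∈ I, deriv (fun y =>
         h y * u y ^ 2 + g * h y ^ 2 / 2 + (1 / 3) * h y * α y ^ 2) x
       + g * h x * deriv b x = 0) ∧
     (∀ x ∈ I, deriv (fun y => 2 * h y * u y * α y) x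
       = u x * deriv (fun y => h y * α y) x))
    ↔
    ((∃ c₁, ∀ x ∈ I, h x * u x = c₁) ∧
     (∃ c₂, ∀ x ∈ I,
        (1 / 2) * u x ^ 2 + g * (h x + b x) + (1 / 2) * α x ^ 2 = c₂) ∧
     (∃ c₃, ∀ x ∈ I, α x / h x = c₃)) :=
  swme1_steady_state_characterization_general I hIopen hIconn g h u α b hh hu hα hb hpos hune
end

section
/- Let g, h, u, α be real numbers. The 4×4 real matrix A = ![![0, 1, 0, 0], ![−u^2 + g*h − α^2/3, 2*u, 2*α/3, 0], ![−2*u*α, 2*α, u, 3*α/5], ![−(2/3)*α^2, 0, α/3, u]] (the system matrix of the second-order hyperbolic shallow water moment equations HSWME2) has characteristic polynomial ((X − u)^2 − (g*h + α^2)) * ((X − u)^2 − α^2/5); in particular, when g*h + α^2 ≥ 0 its eigenvalues are the real numbers u ± √(g h + α^2) and u ± √(α^2/5). -/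
open Polynomial
set_option maxHeartbeats 2000000

private theorem det_fin_four' {R : Type*} [CommRing R] (M : Matrix (Fin 4) (Fin 4) R) :
    M.det =
      M 0 0 * M 1 1 * M 2 2 * M 3 3 - M 0 0 * M 1 1 * M 2 3 * M 3 2 -
      M 0 0 * M 1 2 * M 2 1 * M 3 3 + M 0 0 * M 1 2 * M 2 3 * M 3 1 +
      M 0 0 * M 1 3 * M 2 1 * M 3 2 - M 0 0 * M 1 3 * M 2 2 * M 3 1 -
      M 0 1 * M 1 0 * M 2 2 * M 3 3 + M 0 1 * M 1 0 * M 2 3 * M 3 2 +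
      M 0 1 * M 1 2 * M 2 0 * M 3 3 - M 0 1 * M 1 2 * M 2 3 * M 3 0 -
      M 0 1 * M 1 3 * M 2 0 * M 3 2 + M 0 1 * M 1 3 * M 2 2 * M 3 0 +
      M 0 2 * M 1 0 * M 2 1 * M 3 3 - M 0 2 * M 1 0 * M 2 3 * M 3 1 -
      M 0 2 * M 1 1 * M 2 0 * M 3 3 + M 0 2 * M 1 1 * M 2 3 * M 3 0 +
      M 0 2 * M 1 3 * M 2 0 * M 3 1 - M 0 2 * M 1 3 * M 2 1 * M 3 0 -
      M 0 3 * M 1 0 * M 2 1 * M 3 2 + M 0 3 * M 1 0 * M 2 2 * M 3 1 +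
      M 0 3 * M 1 1 * M 2 0 * M 3 2 - M 0 3 * M 1 1 * M 2 2 * M 3 0 -
      M 0 3 * M 1 2 * M 2 0 * M 3 1 + M 0 3 * M 1 2 * M 2 1 * M 3 0 := by
  rw [Matrix.det_succ_row_zero]
  simp [Fin.sum_univ_succ, Matrix.det_fin_three, Fin.succAbove,
    show (Fin.succ 2 : Fin 4) = 3 from rfl, show (Fin.castSucc 2 : Fin 4) = 2 from rfl,
    show ((if (1:Fin 4) < 3 then 1 else 2 : Fin 4)) = 1 from rfl]
  ring

/-- The system matrix of the second-order hyperbolic shallow water moment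
equations (HSWME2) has characteristic polynomial
`((X - u)² - (g h + α²)) ((X - u)² - α²/5)`; in particular, when
`g h + α² ≥ 0` its eigenvalues are the real numbers `u ± √(g h + α²)` and
`u ± √(α²/5)`. -/
theorem hswme2_system_matrix_charpoly (g h u α : ℝ) :
    (!![0, 1, 0, 0;
        -u ^ 2 + g * h - α ^ 2 / 3, 2 * u, 2 * α / 3, 0;
        -2 * u * α, 2 * α, u, 3 * α / 5;
        -(2 / 3) * α ^ 2, 0, α / 3, u] : Matrix (Fin 4) (Fin 4) ℝ).charpoly
      = ((X - C u) ^ 2 - C (g * h + α ^ 2)) * ((X - C u) ^ 2 - C (α ^ 2 / 5)) ∧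
    (0 ≤ g * h + α ^ 2 →
      ((!![0, 1, 0, 0;
           -u ^ 2 + g * h - α ^ 2 / 3, 2 * u, 2 * α / 3, 0;
           -2 * u * α, 2 * α, u, 3 * α / 5;
           -(2 / 3) * α ^ 2, 0, α / 3, u] : Matrix (Fin 4) (Fin 4) ℝ).charpoly.IsRoot
          (u + Real.sqrt (g * h + α ^ 2)) ∧
       (!![0, 1, 0, 0;
           -u ^ 2 + g * h - α ^ 2 / 3, 2 * u, 2 * α / 3, 0;
           -2 * u * α, 2 * α, u, 3 * α / 5;
           -(2 / 3) * α ^ 2, 0, α / 3, u] : Matrix (Fin 4) (Fin 4) ℝ).charpoly.IsRoot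
          (u - Real.sqrt (g * h + α ^ 2)) ∧
       (!![0, 1, 0, 0;
           -u ^ 2 + g * h - α ^ 2 / 3, 2 * u, 2 * α / 3, 0;
           -2 * u * α, 2 * α, u, 3 * α / 5;
           -(2 / 3) * α ^ 2, 0, α / 3, u] : Matrix (Fin 4) (Fin 4) ℝ).charpoly.IsRoot
          (u + Real.sqrt (α ^ 2 / 5)) ∧
       (!![0, 1, 0, 0;
           -u ^ 2 + g * h - α ^ 2 / 3, 2 * u, 2 * α / 3, 0;
           -2 * u * α, 2 * α, u, 3 * α / 5;
           -(2 / 3) * α ^ 2, 0, α / 3, u] : Matrix (Fin 4) (Fin 4) ℝ).charpoly.IsRoot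
          (u - Real.sqrt (α ^ 2 / 5)))) := by
  have key : (!![0, 1, 0, 0;
        -u ^ 2 + g * h - α ^ 2 / 3, 2 * u, 2 * α / 3, 0;
        -2 * u * α, 2 * α, u, 3 * α / 5;
        -(2 / 3) * α ^ 2, 0, α / 3, u] : Matrix (Fin 4) (Fin 4) ℝ).charpoly
      = ((X - C u) ^ 2 - C (g * h + α ^ 2)) * ((X - C u) ^ 2 - C (α ^ 2 / 5)) := by
    apply Polynomial.funext
    intro x
    rw [Matrix.charpoly, det_fin_four']
    simp [Matrix.charmatrix_apply, Matrix.diagonal]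
    ring
  refine ⟨key, fun hge => ?_⟩
  rw [key]
  refine ⟨?_, ?_, ?_, ?_⟩ <;>
  · simp only [IsRoot, eval_mul, eval_sub, eval_pow, eval_C, eval_X]
    nlinarith [Real.sq_sqrt hge, Real.sq_sqrt (by positivity : (0:ℝ) ≤ α ^ 2 / 5),
      Real.sqrt_nonneg (g * h + α ^ 2), Real.sqrt_nonneg (α ^ 2 / 5)]
end

section
/- Let g, h, u, α₁, α₂ be real numbers. The 4×4 real matrix A = ![![0, 1, 0, 0], ![−u^2 + g*h − α₁^2/3 − α₂^2/5, 2*u, 2*α₁/3, 2*α₂/5], ![−2*u*α₁, 2*α₁, u, 0], ![−2*u*α₂, 2*α₂, 0, u]] (the system matrix of the second-order shallow water linearized moment equations SWLME2) has characteristic polynomial (X − u)^2 * ((X − u)^2 − (g*h + α₁^2 + (3/5)*α₂^2)); in particular, when h > 0 and g > 0 all its eigenvalues are real for every choice of α₁, α₂, namely u (double) and u ± √(g h + α₁^2 + (3/5) α₂^2). -/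
/-!
Expanding `det (X - A)` by the Schur complement of the diagonal block `u • 1` shows that, for a
matrix whose lower-right `2 × 2` block is `u • 1` and whose first row is `e₂`, the characteristic
polynomial is `(X - u)² (X² - d X - c) - (X - u) (m X + n)`, where `m = p s + q w` and
`n = p r + q t` collect the coupling between the two blocks. For SWLME2 the coupling satisfies `n = -u m`, so a further
factor `X - u` splits off and the remaining factor is `(X - u)² - (g h + α₁² + (3/5) α₂²)`.
-/

open Polynomial

theorem Matrix.charpoly_of_scalar_lower_block {R : Type*} [CommRing R]
    (c d p q r s t w u : R) :
    (!![0, 1, 0, 0;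
        c, d, p, q;
        r, s, u, 0;
        t, w, 0, u] : Matrix (Fin 4) (Fin 4) R).charpoly
      = (X - C u) ^ 2 * (X ^ 2 - C d * X - C c)
        - (X - C u) * (C (p * s + q * w) * X + C (p * r + q * t)) := by
  simp [Matrix.charpoly, Matrix.det_succ_row_zero, Fin.sum_univ_succ, Matrix.charmatrix_apply,
    Fin.succAbove]
  ring

theorem Polynomial.X_sub_C_sq_sub_C_of_sq_eq {R : Type*} [CommRing R] {u r σ : R}
    (hr : r ^ 2 = σ) :
    (X - C u) ^ 2 - C σ = (X - C (u + r)) * (X - C (u - r)) := by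
  rw [← hr]
  simp only [map_add, map_sub, map_pow]
  ring

def swlme2SystemMatrix {K : Type*} [Field K] (g h u α₁ α₂ : K) : Matrix (Fin 4) (Fin 4) K :=
  !![0, 1, 0, 0;
     -u ^ 2 + g * h - α₁ ^ 2 / 3 - α₂ ^ 2 / 5, 2 * u, 2 * α₁ / 3, 2 * α₂ / 5;
     -2 * u * α₁, 2 * α₁, u, 0;
     -2 * u * α₂, 2 * α₂, 0, u]

theorem swlme2SystemMatrix_charpoly {K : Type*} [Field K] [CharZero K] (g h u α₁ α₂ : K) :
    (swlme2SystemMatrix g h u α₁ α₂).charpoly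
      = (X - C u) ^ 2 * ((X - C u) ^ 2 - C (g * h + α₁ ^ 2 + (3 / 5) * α₂ ^ 2)) := by
  set c := -u ^ 2 + g * h - α₁ ^ 2 / 3 - α₂ ^ 2 / 5
  set m := 4 * α₁ ^ 2 / 3 + 4 * α₂ ^ 2 / 5
  have hm : 2 * α₁ / 3 * (2 * α₁) + 2 * α₂ / 5 * (2 * α₂) = m := by ring
  have hn : 2 * α₁ / 3 * (-2 * u * α₁) + 2 * α₂ / 5 * (-2 * u * α₂) = -u * m := by ring
  have hσ : g * h + α₁ ^ 2 + (3 / 5) * α₂ ^ 2 = u ^ 2 + c + m := by ring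
  rw [swlme2SystemMatrix, Matrix.charpoly_of_scalar_lower_block, hm, hn, hσ]
  simp only [map_add, map_mul, map_neg, map_pow, map_ofNat]
  ring

/-- The system matrix of the second-order shallow water linearized moment
equations (SWLME2) has characteristic polynomial
`(X - u)² ((X - u)² - (g h + α₁² + (3/5) α₂²))`; in particular, when `h > 0`
and `g > 0` all its eigenvalues are real for every `α₁, α₂`, namely `u`
(double) and `u ± √(g h + α₁² + (3/5) α₂²)`. -/
theorem swlme2_system_matrix_charpoly (g h u α₁ α₂ : ℝ) :
    (!![0, 1, 0, 0;
        -u ^ 2 + g * h - α₁ ^ 2 / 3 - α₂ ^ 2 / 5, 2 * u, 2 * α₁ / 3, 2 * α₂ / 5;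
        -2 * u * α₁, 2 * α₁, u, 0;
        -2 * u * α₂, 2 * α₂, 0, u] : Matrix (Fin 4) (Fin 4) ℝ).charpoly
      = (X - C u) ^ 2 * ((X - C u) ^ 2 - C (g * h + α₁ ^ 2 + (3 / 5) * α₂ ^ 2)) ∧
    (0 < h → 0 < g →
      (!![0, 1, 0, 0;
          -u ^ 2 + g * h - α₁ ^ 2 / 3 - α₂ ^ 2 / 5, 2 * u, 2 * α₁ / 3, 2 * α₂ / 5;
          -2 * u * α₁, 2 * α₁, u, 0;
          -2 * u * α₂, 2 * α₂, 0, u] : Matrix (Fin 4) (Fin 4) ℝ).charpoly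
        = (X - C u) ^ 2
          * (X - C (u + Real.sqrt (g * h + α₁ ^ 2 + (3 / 5) * α₂ ^ 2)))
          * (X - C (u - Real.sqrt (g * h + α₁ ^ 2 + (3 / 5) * α₂ ^ 2)))) := by
  refine ⟨swlme2SystemMatrix_charpoly g h u α₁ α₂, fun hh hg => ?_⟩
  have hσ : 0 ≤ g * h + α₁ ^ 2 + (3 / 5) * α₂ ^ 2 := by positivity
  refine (swlme2SystemMatrix_charpoly g h u α₁ α₂).trans ?_
  rw [X_sub_C_sq_sub_C_of_sq_eq (Real.sq_sqrt hσ), mul_assoc]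
end
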